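/- For every integer n ≥ 1, the metallic mean Wang shift Ω_n is aperiodic: Ω_n is nonempty, and for every valid configuration w ∈ Ω_n and every k ∈ ℤ² with k ≠ (0,0), one has σ^k(w) ≠ w. -/

import Mathlib

open scoped BigOperators

namespace MetallicMean

/-- A 3-dimensional integer vector. -/
abbrev Vec3 := ℤ × ℤ × ℤ

/-- A Wang tile is a quadruple (right, top, left, bottom) of labels. -/
abbrev Tile := Vec3 × Vec3 × Vec3 × Vec3

def right (τ : Tile) : Vec3 := τ.1
def top (τ : Tile) : Vec3 := τ.2.1
def left (τ : Tile) : Vec3 := τ.2.2.1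
def bottom (τ : Tile) : Vec3 := τ.2.2.2

/-- Reflection of a tile by the positive diagonal: (r,t,ℓ,b) ↦ (t,r,b,ℓ). -/
def reflect (τ : Tile) : Tile := (top τ, right τ, bottom τ, left τ)

/-- The set V_n of admissible labels. -/
def Vset (n : ℤ) : Set Vec3 :=
  {v | 0 ≤ v.1 ∧ v.1 ≤ v.2.1 ∧ v.2.1 ≤ v.2.2 ∧ v.2.2 ≤ n + 1 ∧ v.2.1 ≤ 1}

/-- The function θ_n. -/
def theta (n : ℤ) (u v : Vec3) : Vec3 :=
  (u.1,
   if u.1 = 0 then v.2.2 - n else 1,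
   if v.1 = 0 then v.2.1 + u.1 else u.2.2 + 1)

/-- The set 𝒞_n of instances of the θ_n-chip. -/
def Cset (n : ℤ) : Set Tile :=
  {τ | ∃ u v : Vec3, u ∈ Vset n ∧ v ∈ Vset n ∧
      theta n u v ∈ Vset n ∧ theta n v u ∈ Vset n ∧
      τ = (theta n u v, theta n v u, u, v)}

/-- The n-th metallic mean β, the positive root of x² - nx - 1. -/
noncomputable def beta (n : ℤ) : ℝ := ((n : ℝ) + Real.sqrt ((n : ℝ) ^ 2 + 4)) / 2

/-- The conjugate root β* = n - β = -β⁻¹. -/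
noncomputable def betaStar (n : ℤ) : ℝ := (n : ℝ) - beta n

/-- The coding map Λ_n. -/
noncomputable def Lam (n : ℤ) (x y : ℝ) : Vec3 :=
  (⌊y + betaStar n + 1⌋,
   ⌊(beta n)⁻¹ * x + y + betaStar n + 1⌋,
   ⌊beta n * x + y + betaStar n + 1⌋)

/-- The Wang tile TILE_n(x, y), written as (right, top, left, bottom). -/
noncomputable def TileAt (n : ℤ) (x y : ℝ) : Tile :=
  (Lam n (Int.fract x) (Int.fract y),
   Lam n (Int.fract y) (Int.fract x),
   Lam n (Int.fract (x + betaStar n)) (Int.fract y),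
   Lam n (Int.fract (y + betaStar n)) (Int.fract x))

/-- The metallic mean Wang tile set 𝒯_n = {TILE_n(x,y) : (x,y) ∈ [0,1]²}. -/
def Tset (n : ℤ) : Set Tile :=
  {τ | ∃ x y : ℝ, x ∈ Set.Icc (0 : ℝ) 1 ∧ y ∈ Set.Icc (0 : ℝ) 1 ∧ τ = TileAt n x y}

/-- A configuration assigns a tile to every position of ℤ². -/
abbrev Config := ℤ × ℤ → Tile

/-- A configuration is valid w.r.t. a set `S` of Wang tiles if all its tiles are in `S`
and contiguous edges of adjacent tiles match. -/
def IsValid (S : Set Tile) (w : Config) : Prop :=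
  (∀ p : ℤ × ℤ, w p ∈ S) ∧
  ∀ p : ℤ × ℤ,
    right (w p) = left (w (p + (1, 0))) ∧
    top (w p) = bottom (w (p + (0, 1)))

/-- The Wang shift Ω_S of all valid configurations over `S`. -/
def OmegaOf (S : Set Tile) : Set Config := {w | IsValid S w}

/-- The shift ℤ²-action on configurations: (σ^k w)(p) = w(p + k). -/
def shift (k : ℤ × ℤ) (w : Config) : Config := fun p => w (p + k)

end MetallicMean

/-!
Every tile of `Tset n` is an instance of the θ_n-chip, i.e. lies in `Cset n`: this is a floor
computation resting on `β = n + β⁻¹`. In a valid configuration over `Cset n`, the first coordinates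
of the labels are bits that are constant along rows and along columns, and the third coordinate
`level` of the left labels is bounded and obeys a recurrence driven by these bits. Summing the
recurrence over a period block, and again for the transposed configuration, shows that if `B` of
the `p` columns of a period have bit `1`, then `B ^ 2 - (n + 2) p B + n p ^ 2 = 0`. So `B / p` would
be a rational root of `x ^ 2 - (n + 2) x + n`, whose discriminant `n ^ 2 + 4` is not a square.
-/

namespace MetallicMean

section Coding

open Int

variable {n : ℤ}

lemma beta_pos (n : ℤ) : 0 < beta n := by
  have h := Real.sq_sqrt (by positivity : (0 : ℝ) ≤ (n : ℝ) ^ 2 + 4)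
  have := Real.sqrt_nonneg ((n : ℝ) ^ 2 + 4)
  unfold beta
  nlinarith

lemma beta_mul_inv (n : ℤ) : beta n * (beta n)⁻¹ = 1 := mul_inv_cancel₀ (beta_pos n).ne'

lemma beta_sq (n : ℤ) : beta n ^ 2 = n * beta n + 1 := by
  have h := Real.sq_sqrt (by positivity : (0 : ℝ) ≤ (n : ℝ) ^ 2 + 4)
  unfold beta
  linear_combination h / 4

lemma beta_eq_add_inv (n : ℤ) : beta n = n + (beta n)⁻¹ := by
  field_simp [(beta_pos n).ne']
  linear_combination beta_sq n

lemma betaStar_eq (n : ℤ) : betaStar n = -(beta n)⁻¹ := by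
  have h := beta_eq_add_inv n
  rw [betaStar]
  linarith

lemma inv_beta_lt_one (hn : 1 ≤ n) : (beta n)⁻¹ < 1 := by
  have h := beta_eq_add_inv n
  have : (1 : ℝ) ≤ n := by exact_mod_cast hn
  rw [inv_lt_one₀ (beta_pos n)]
  linarith [inv_pos.2 (beta_pos n)]

lemma floor_mul_eq_floor {g w : ℝ} (hg₀ : 0 < g) (hg₁ : g ≤ 1) (hw₀ : -1 ≤ w) (hw₁ : w < 1) :
    ⌊g * w⌋ = ⌊w⌋ := by
  rcases lt_or_ge w 0 with hw | hw
  · rw [(floor_eq_iff (z := -1)).2 ⟨by push_cast; nlinarith, by push_cast; nlinarith⟩,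
      (floor_eq_iff (z := -1)).2 ⟨by push_cast; linarith, by push_cast; linarith⟩]
  · rw [floor_eq_zero_iff.2 ⟨by positivity, by nlinarith⟩, floor_eq_zero_iff.2 ⟨hw, hw₁⟩]

lemma fract_fract_add (x c : ℝ) : fract (fract x + c) = fract (x + c) := by
  rw [← fract_add_intCast (fract x + c) ⌊x⌋, add_right_comm, fract_add_floor]

lemma Lam_fst_eq_zero_iff (hn : 1 ≤ n) {X Y : ℝ} (hY : Y ∈ Set.Ico 0 1) :
    (Lam n X Y).1 = 0 ↔ Y < (beta n)⁻¹ := by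
  have hg₁ := inv_beta_lt_one hn
  simp only [Lam, betaStar_eq, floor_eq_zero_iff, Set.mem_Ico]
  constructor
  · intro h; linarith [h.2]
  · intro h; constructor <;> linarith [hY.1]

lemma Lam_mem_Vset (hn : 1 ≤ n) {X Y : ℝ} (hX : X ∈ Set.Ico 0 1) (hY : Y ∈ Set.Ico 0 1) :
    Lam n X Y ∈ Vset n := by
  have hb := beta_eq_add_inv n
  have hg₀ := inv_pos.2 (beta_pos n)
  have hg₁ := inv_beta_lt_one hn
  have hn' : (1 : ℝ) ≤ n := by exact_mod_cast hn
  obtain ⟨hX₀, hX₁⟩ := hX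
  obtain ⟨hY₀, hY₁⟩ := hY
  simp only [Vset, Lam, betaStar_eq, Set.mem_ofPred_eq]
  refine ⟨floor_nonneg.2 (by linarith), floor_le_floor (by nlinarith),
    floor_le_floor (by nlinarith), lt_add_one_iff.1 (floor_lt.2 ?_),
    lt_add_one_iff.1 (floor_lt.2 ?_)⟩
  · push_cast; nlinarith
  · push_cast; nlinarith

lemma Lam_snd_eq (hn : 1 ≤ n) {X Y : ℝ} (hX : X ∈ Set.Ico 0 1) (hY : Y ∈ Set.Ico 0 1) :
    (Lam n X Y).2.1 =
      if (Lam n X Y).1 = 0 then (Lam n (fract (Y + betaStar n)) X).2.2 - n else 1 := by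
  have hbg := beta_mul_inv n
  have hb := beta_eq_add_inv n
  have hg₀ := inv_pos.2 (beta_pos n)
  have hg₁ := inv_beta_lt_one hn
  obtain ⟨hX₀, hX₁⟩ := hX
  obtain ⟨hY₀, hY₁⟩ := hY
  split_ifs with hYg
  · rw [Lam_fst_eq_zero_iff hn ⟨hY₀, hY₁⟩] at hYg
    have hfr : fract (Y + betaStar n) = Y + betaStar n + 1 := by
      rw [fract_eq_iff]
      refine ⟨?_, ?_, -1, by ring⟩ <;> rw [betaStar_eq] <;> linarith
    have hbY : beta n * Y < 1 := by nlinarith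
    rw [hfr]
    simp only [Lam, betaStar_eq]
    rw [show beta n * (Y + -(beta n)⁻¹ + 1) + X + -(beta n)⁻¹ + 1 = beta n * Y + X + (n : ℤ) by
        linear_combination hb - hbg,
      floor_add_intCast, add_sub_cancel_right,
      show (beta n)⁻¹ * X + Y + -(beta n)⁻¹ + 1 = (beta n)⁻¹ * (beta n * Y + X - 1) + 1 by
        linear_combination (-Y) * hbg,
      floor_add_one, floor_mul_eq_floor hg₀ hg₁.le (by nlinarith) (by linarith), floor_sub_one,
      sub_add_cancel]
  · rw [Lam_fst_eq_zero_iff hn ⟨hY₀, hY₁⟩, not_lt] at hYg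
    simp only [Lam, betaStar_eq]
    rw [floor_eq_iff]
    push_cast
    constructor <;> nlinarith

lemma Lam_snd_snd_eq (hn : 1 ≤ n) {X : ℝ} (hX : X ∈ Set.Ico 0 1) (Y : ℝ) :
    (Lam n X Y).2.2 =
      if (Lam n Y X).1 = 0 then (Lam n (fract (Y + betaStar n)) X).2.1 + (Lam n X Y).1
      else (Lam n (fract (X + betaStar n)) Y).2.2 + 1 := by
  have hbg := beta_mul_inv n
  have hg₀ := inv_pos.2 (beta_pos n)
  have hg₁ := inv_beta_lt_one hn
  obtain ⟨hX₀, hX₁⟩ := hX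
  split_ifs with hXg
  · rw [Lam_fst_eq_zero_iff hn ⟨hX₀, hX₁⟩] at hXg
    have hbX : beta n * X < 1 := by nlinarith
    have hY' := fract_add_floor (Y + betaStar n)
    have hY'₀ := fract_nonneg (Y + betaStar n)
    have hY'₁ := fract_lt_one (Y + betaStar n)
    set Y' := fract (Y + betaStar n)
    set k := ⌊Y + betaStar n⌋
    simp only [Lam]
    rw [show beta n * X + Y + betaStar n + 1 = (beta n * X + Y' - 1) + ((k + 2 : ℤ) : ℝ) by
        push_cast; linarith,
      show (beta n)⁻¹ * Y' + X + betaStar n + 1 = (beta n)⁻¹ * (beta n * X + Y' - 1) + 1 by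
        rw [betaStar_eq]; linear_combination (-X) * hbg,
      floor_add_intCast, floor_add_one, floor_add_one,
      floor_mul_eq_floor hg₀ hg₁.le (by nlinarith) (by linarith)]
    ring
  · rw [Lam_fst_eq_zero_iff hn ⟨hX₀, hX₁⟩, not_lt] at hXg
    have hfr : fract (X + betaStar n) = X + betaStar n := by
      rw [fract_eq_self, betaStar_eq]; constructor <;> linarith
    simp only [Lam, hfr]
    rw [← floor_add_one]
    congr 1
    rw [betaStar_eq]
    linear_combination hbg

lemma right_TileAt (hn : 1 ≤ n) (x y : ℝ) :
    right (TileAt n x y) = theta n (left (TileAt n x y)) (bottom (TileAt n x y)) := by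
  have hX : fract x ∈ Set.Ico 0 1 := ⟨fract_nonneg x, fract_lt_one x⟩
  have hY : fract y ∈ Set.Ico 0 1 := ⟨fract_nonneg y, fract_lt_one y⟩
  simp only [right, left, bottom, TileAt, theta, ← fract_fract_add x, ← fract_fract_add y]
  exact Prod.ext rfl (Prod.ext (Lam_snd_eq hn hX hY) (Lam_snd_snd_eq hn hX _))

lemma mem_Cset_iff {τ : Tile} :
    τ ∈ Cset n ↔ left τ ∈ Vset n ∧ bottom τ ∈ Vset n ∧ right τ ∈ Vset n ∧ top τ ∈ Vset n ∧
      right τ = theta n (left τ) (bottom τ) ∧ top τ = theta n (bottom τ) (left τ) := by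
  constructor
  · rintro ⟨u, v, hu, hv, huv, hvu, rfl⟩
    exact ⟨hu, hv, huv, hvu, rfl, rfl⟩
  · rintro ⟨hl, hb, hr, ht, hrθ, htθ⟩
    exact ⟨left τ, bottom τ, hl, hb, hrθ ▸ hr, htθ ▸ ht, by rw [← hrθ, ← htθ]; rfl⟩

lemma TileAt_mem_Cset (hn : 1 ≤ n) (x y : ℝ) : TileAt n x y ∈ Cset n := by
  have h : ∀ x : ℝ, fract x ∈ Set.Ico (0 : ℝ) 1 := fun x => ⟨fract_nonneg x, fract_lt_one x⟩
  exact mem_Cset_iff.2 ⟨Lam_mem_Vset hn (h _) (h _), Lam_mem_Vset hn (h _) (h _),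
    Lam_mem_Vset hn (h _) (h _), Lam_mem_Vset hn (h _) (h _), right_TileAt hn x y,
    right_TileAt hn y x⟩

lemma Tset_subset_Cset (hn : 1 ≤ n) : Tset n ⊆ Cset n := by
  rintro τ ⟨x, y, -, -, rfl⟩
  exact TileAt_mem_Cset hn x y

lemma reflect_mem_Cset {τ : Tile} (h : τ ∈ Cset n) : reflect τ ∈ Cset n := by
  obtain ⟨hl, hb, hr, ht, hrθ, htθ⟩ := mem_Cset_iff.1 h
  exact mem_Cset_iff.2 ⟨hb, hl, ht, hr, htθ, hrθ⟩

lemma TileAt_fract (n : ℤ) (x y : ℝ) : TileAt n (fract x) (fract y) = TileAt n x y := by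
  simp only [TileAt, fract_fract, fract_fract_add]

lemma TileAt_mem_Tset (n : ℤ) (x y : ℝ) : TileAt n x y ∈ Tset n :=
  ⟨fract x, fract y, ⟨fract_nonneg x, (fract_lt_one x).le⟩, ⟨fract_nonneg y, (fract_lt_one y).le⟩,
    (TileAt_fract n x y).symm⟩

lemma isValid_TileAt_orbit (n : ℤ) :
    IsValid (Tset n) fun m => TileAt n (-m.1 * betaStar n) (-m.2 * betaStar n) := by
  refine ⟨fun m => TileAt_mem_Tset n _ _, fun m => ⟨?_, ?_⟩⟩ <;>
    simp only [right, left, top, bottom, TileAt, Prod.fst_add, Prod.snd_add] <;> push_cast <;>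
    ring_nf

end Coding

section Validity

variable {S T : Set Tile} {w : Config}

lemma IsValid.mono (hST : S ⊆ T) (hw : IsValid S w) : IsValid T w :=
  ⟨fun p => hST (hw.1 p), hw.2⟩

lemma IsValid.right_eq_left (hw : IsValid S w) (i j : ℤ) :
    right (w (i, j)) = left (w (i + 1, j)) := by
  simpa using (hw.2 (i, j)).1

lemma IsValid.top_eq_bottom (hw : IsValid S w) (i j : ℤ) :
    top (w (i, j)) = bottom (w (i, j + 1)) := by
  simpa using (hw.2 (i, j)).2

def transpose (w : Config) : Config := fun m => reflect (w m.swap)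

lemma IsValid.transpose (hS : ∀ τ ∈ S, reflect τ ∈ S) (hw : IsValid S w) :
    IsValid S (transpose w) := by
  refine ⟨fun p => hS _ (hw.1 _), fun p => ?_⟩
  have h := hw.2 p.swap
  simp only [MetallicMean.transpose, Prod.swap_add, Prod.swap_prod_mk] at h ⊢
  exact ⟨h.2, h.1⟩

lemma shift_swap_transpose (k : ℤ × ℤ) (w : Config) :
    shift k.swap (transpose w) = transpose (shift k w) := by
  funext m
  simp [shift, transpose, Prod.swap_add]

lemma shift_neg_eq_self (k : ℤ × ℤ) (h : shift k w = w) : shift (-k) w = w := by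
  funext m
  simpa [shift] using (congrFun h (m + -k)).symm

lemma exists_shift_natAbs_fst {k : ℤ × ℤ} (h : shift k w = w) :
    ∃ Q : ℤ, Q.natAbs = k.2.natAbs ∧ shift ((k.1.natAbs : ℤ), Q) w = w := by
  rcases Int.natAbs_eq k.1 with h1 | h1
  · exact ⟨k.2, rfl, by rwa [← h1]⟩
  · refine ⟨-k.2, Int.natAbs_neg _, ?_⟩
    rw [show ((k.1.natAbs : ℤ), -k.2) = -k by ext <;> simp; omega]
    exact shift_neg_eq_self k h

end Validity

open Finset

lemma abs_sum_range_le {f : ℕ → ℤ} {C : ℤ} (hf : ∀ i, |f i| ≤ C) (m : ℕ) :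
    |∑ i ∈ range m, f i| ≤ m * C := by
  calc |∑ i ∈ range m, f i| ≤ ∑ i ∈ range m, |f i| := abs_sum_le_sum_abs _ _
    _ ≤ ∑ _i ∈ range m, C := sum_le_sum fun i _ => hf i
    _ = m * C := by simp

lemma abs_sum_range_add_sub_le {f : ℤ → ℤ} {C : ℤ} (hf : ∀ j, |f j| ≤ C) (d : ℤ) (m : ℕ) :
    |∑ j ∈ range m, (f (j + d) - f j)| ≤ 2 * |d| * C := by
  suffices h : ∀ g : ℤ → ℤ, (∀ j, |g j| ≤ C) → ∀ e : ℕ,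
      |∑ j ∈ range m, (g (j + e) - g j)| ≤ 2 * e * C by
    obtain ⟨e, rfl | rfl⟩ := Int.eq_nat_or_neg d
    · simpa using h f hf e
    · have := h (fun j => f (j + -e)) (fun j => hf _) e
      simp only [add_neg_cancel_right, sum_sub_distrib] at this
      rw [abs_neg, Nat.abs_cast, sum_sub_distrib, abs_sub_comm]
      exact this
  intro g hg e
  induction e with
  | zero => simp
  | succ e ih =>
    have htel := sum_range_sub (fun j : ℕ => g (j + e)) m
    have hC : |g (m + e) - g e| ≤ 2 * C := by
      rw [abs_le]; constructor <;> linarith [abs_le.1 (hg (m + e)), abs_le.1 (hg e)]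
    push_cast at htel ⊢
    rw [zero_add] at htel
    have hsplit : ∑ j ∈ range m, (g (j + (e + 1)) - g j) =
        ∑ j ∈ range m, (g (j + 1 + e) - g (j + e)) + ∑ j ∈ range m, (g (j + e) - g j) := by
      rw [← sum_add_distrib]
      exact sum_congr rfl fun j _ => by ring_nf
    rw [hsplit, htel]
    calc _ ≤ |g (m + e) - g e| + |∑ j ∈ range m, (g (j + e) - g j)| := abs_add_le _ _
      _ ≤ _ := by linarith

lemma eq_zero_of_forall_abs_nat_mul_le {K C : ℤ} (h : ∀ N : ℕ, |N * K| ≤ C) : K = 0 := by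
  by_contra hK
  have h1 : 1 ≤ |K| := Int.one_le_abs hK
  have h2 := h (C.toNat + 1)
  rw [abs_mul, abs_of_nonneg (by positivity)] at h2
  push_cast at h2
  have : C ≤ C.toNat := Int.self_le_toNat C
  nlinarith [abs_nonneg ((C.toNat : ℤ) + 1)]

lemma _root_.Function.Periodic.natAbs {α : Type*} {f : ℤ → α} {c : ℤ} (h : Function.Periodic f c) :
    Function.Periodic f c.natAbs := by
  rcases Int.natAbs_eq c with hc | hc
  · rwa [← hc]
  · have := h.neg
    rwa [hc, neg_neg] at this

lemma sum_range_mul_of_periodic {f : ℤ → ℤ} {q : ℕ} (hf : Function.Periodic f q) (N : ℕ) :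
    ∑ j ∈ range (N * q), f j = N * ∑ j ∈ range q, f j := by
  induction N with
  | zero => simp
  | succ N ih =>
    rw [add_mul, one_mul, sum_range_add, ih]
    have h : ∀ j ∈ range q, f ((N * q + j : ℕ) : ℤ) = f j := fun j _ => by
      simpa [add_comm] using (hf.nat_mul N) j
    rw [sum_congr rfl h]
    push_cast
    ring

lemma not_isSquare_sq_add_four {n : ℤ} (hn : n ≠ 0) : ¬IsSquare (n ^ 2 + 4) := by
  rintro ⟨r, hr⟩
  have hn₁ : 1 ≤ |n| := Int.one_le_abs hn
  have hsq : |n| ^ 2 + 4 = |r| ^ 2 := by rw [sq_abs, sq_abs, hr]; ring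
  have hlt : |n| < |r| := by nlinarith [abs_nonneg r]
  have hn₂ : |n| = 1 := by nlinarith
  have hr₂ : |r| = 2 := by nlinarith
  rw [hn₂, hr₂] at hsq
  norm_num at hsq

def charForm (n p B : ℤ) : ℤ := B ^ 2 - (n + 2) * p * B + n * p ^ 2

lemma charForm_ne_zero {n p : ℤ} (hn : n ≠ 0) (hp : p ≠ 0) (B : ℤ) : charForm n p B ≠ 0 := by
  intro h
  apply not_isSquare_sq_add_four hn
  rw [← Rat.isSquare_intCast_iff]
  refine ⟨(2 * B - (n + 2) * p) / p, ?_⟩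
  have hp' : (p : ℚ) ≠ 0 := by exact_mod_cast hp
  have h' : ((charForm n p B : ℤ) : ℚ) = 0 := by rw [h]; rfl
  simp only [charForm] at h'
  push_cast at h' ⊢
  field_simp
  linear_combination -4 * h'

def rowBit (w : Config) (j : ℤ) : ℤ := (left (w (0, j))).1

def colBit (w : Config) (i : ℤ) : ℤ := (bottom (w (i, 0))).1

def level (w : Config) (i j : ℤ) : ℤ := (left (w (i, j))).2.2

def rowCount (w : Config) (m : ℕ) : ℤ := ∑ j ∈ range m, rowBit w j

def colCount (w : Config) (m : ℕ) : ℤ := ∑ i ∈ range m, colBit w i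

lemma rowCount_transpose (w : Config) (m : ℕ) : rowCount (transpose w) m = colCount w m := rfl

lemma colCount_transpose (w : Config) (m : ℕ) : colCount (transpose w) m = rowCount w m := rfl

/-- The total increase of `level` along `x` consecutive rows, `y` of which have bit `1`, across
`p` consecutive columns, `B` of which have bit `1` (up to boundary terms, see `sum_level_sub`). -/
def drift (n p B x y : ℤ) : ℤ := x * B + (p - B) * (y - n * x)

lemma mul_charForm_eq (n p B x y : ℤ) :
    x * (n * charForm n p B) = (p - B) * drift n x y p B - (p + n * p - B) * drift n p B x y := by
  unfold charForm drift
  ring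

section Counting

variable {n : ℤ} {w : Config}

lemma IsValid.left_fst_eq_rowBit (hw : IsValid (Cset n) w) (i j : ℤ) :
    (left (w (i, j))).1 = rowBit w j := by
  have h : Function.Periodic (fun i => (left (w (i, j))).1) 1 := fun i => by
    simp only
    rw [← hw.right_eq_left, (mem_Cset_iff.1 (hw.1 _)).2.2.2.2.1]
    rfl
  simpa [rowBit] using h.int_mul_eq i

lemma IsValid.bottom_fst_eq_colBit (hw : IsValid (Cset n) w) (i j : ℤ) :
    (bottom (w (i, j))).1 = colBit w i :=
  (hw.transpose fun _ => reflect_mem_Cset).left_fst_eq_rowBit j i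

lemma IsValid.rowBit_eq_zero_or_one (hw : IsValid (Cset n) w) (j : ℤ) :
    rowBit w j = 0 ∨ rowBit w j = 1 := by
  have h := (mem_Cset_iff.1 (hw.1 (0, j))).1
  simp only [Vset, Set.mem_ofPred_eq] at h
  unfold rowBit
  omega

lemma IsValid.colBit_eq_zero_or_one (hw : IsValid (Cset n) w) (i : ℤ) :
    colBit w i = 0 ∨ colBit w i = 1 :=
  (hw.transpose fun _ => reflect_mem_Cset).rowBit_eq_zero_or_one i

lemma IsValid.abs_level_le (hw : IsValid (Cset n) w) (i j : ℤ) : |level w i j| ≤ n + 1 := by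
  have h := (mem_Cset_iff.1 (hw.1 (i, j))).1
  simp only [Vset, Set.mem_ofPred_eq] at h
  rw [abs_le, level]
  omega

lemma IsValid.level_succ (hw : IsValid (Cset n) w) (i j : ℤ) :
    level w (i + 1) j =
      if colBit w i = 0 then level w i (j - 1) + rowBit w j - n else level w i j + 1 := by
  have hbot : bottom (w (i, j)) = top (w (i, j - 1)) := by
    simpa using (hw.top_eq_bottom i (j - 1)).symm
  simp only [level, ← hw.right_eq_left, (mem_Cset_iff.1 (hw.1 _)).2.2.2.2.1, theta, hbot,
    (mem_Cset_iff.1 (hw.1 _)).2.2.2.2.2, hw.bottom_fst_eq_colBit, hw.left_fst_eq_rowBit]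
  split_ifs <;> ring

lemma sum_ite_of_zero_or_one {b : ℤ → ℤ} (hb : ∀ i, b i = 0 ∨ b i = 1) (p : ℕ) (u v : ℤ) :
    ∑ i ∈ range p, (if b i = 0 then u else v) =
      (p - ∑ i ∈ range p, b i) * u + (∑ i ∈ range p, b i) * v := by
  have h : ∀ i ∈ range p, (if b i = 0 then u else v) = u + b i * (v - u) := by
    intro i _
    rcases hb i with h | h <;> simp [h]
  rw [sum_congr rfl h, sum_add_distrib, ← sum_mul, sum_const, card_range, nsmul_eq_mul]
  ring

lemma IsValid.sum_level_succ_sub (hw : IsValid (Cset n) w) (i : ℤ) (m : ℕ) :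
    ∑ j ∈ range m, (level w (i + 1) j - level w i j) =
      (if colBit w i = 0 then level w i (-1) - level w i (m - 1) else 0) +
        if colBit w i = 0 then rowCount w m - n * m else m := by
  simp only [hw.level_succ]
  split_ifs
  · have h : ∀ j ∈ range m, level w i (j - 1) + rowBit w j - n - level w i j =
        (level w i ((j : ℕ) - 1) - level w i (((j + 1 : ℕ) : ℤ) - 1)) + (rowBit w j - n) := by
      intro j _
      push_cast
      ring_nf
    rw [sum_congr rfl h, sum_add_distrib, sum_range_sub' (fun j : ℕ => level w i ((j : ℤ) - 1)),
      sum_sub_distrib, sum_const, card_range, nsmul_eq_mul, rowCount]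
    push_cast
    ring
  · simp

lemma IsValid.sum_level_sub (hw : IsValid (Cset n) w) (p m : ℕ) :
    ∑ j ∈ range m, (level w p j - level w 0 j) =
      ∑ i ∈ range p, (if colBit w i = 0 then level w i (-1) - level w i (m - 1) else 0) +
        drift n p (colCount w p) m (rowCount w m) := by
  calc ∑ j ∈ range m, (level w p j - level w 0 j)
      = ∑ j ∈ range m, ∑ i ∈ range p, (level w ((i : ℤ) + 1) j - level w i j) := by
        refine sum_congr rfl fun j _ => ?_
        have h := sum_range_sub (fun i : ℕ => level w i j) p
        push_cast at h
        exact h.symm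
    _ = ∑ i ∈ range p, ∑ j ∈ range m, (level w ((i : ℤ) + 1) j - level w i j) := sum_comm
    _ = _ := by
        rw [sum_congr rfl fun (i : ℕ) _ => hw.sum_level_succ_sub i m, sum_add_distrib,
          sum_ite_of_zero_or_one hw.colBit_eq_zero_or_one, drift, colCount]
        ring

lemma IsValid.exists_bound_drift (hw : IsValid (Cset n) w) {p : ℕ} {Q : ℤ}
    (hper : shift (p, Q) w = w) :
    ∃ C, ∀ M : ℕ, |drift n p (colCount w p) M (rowCount w M)| ≤ C := by
  refine ⟨2 * |Q| * (n + 1) + p * (2 * (n + 1)), fun M => ?_⟩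
  have hsum := hw.sum_level_sub p M
  have hshift : ∀ j, level w p j = level w 0 (j + -Q) := by
    intro j
    simpa [level, shift] using congrArg (fun w => level w 0 (j + -Q)) hper
  have h₁ : |∑ j ∈ range M, (level w p j - level w 0 j)| ≤ 2 * |Q| * (n + 1) := by
    simp only [hshift]
    simpa using abs_sum_range_add_sub_le (hw.abs_level_le 0) (-Q) M
  have h₂ : |∑ i ∈ range p,
      (if colBit w i = 0 then level w i (-1) - level w i (M - 1) else 0)| ≤ p * (2 * (n + 1)) := by
    refine abs_sum_range_le (fun i => ?_) p
    have := hw.abs_level_le i (-1)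
    have := hw.abs_level_le i (M - 1)
    split_ifs
    · rw [abs_le] at *; constructor <;> linarith
    · simp; linarith [abs_nonneg (level w i (-1))]
  rw [← sub_eq_of_eq_add' hsum]
  calc _ ≤ _ := abs_sub _ _
    _ ≤ _ := add_le_add h₁ h₂

lemma IsValid.exists_bound_drift_of_vertical (hw : IsValid (Cset n) w) {Q : ℤ}
    (hper : shift (0, Q) w = w) :
    ∃ C, ∀ M : ℕ, |drift n M (colCount w M) Q.natAbs (rowCount w Q.natAbs)| ≤ C := by
  refine ⟨Q.natAbs * (2 * (n + 1)), fun M => ?_⟩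
  have hcol : ∀ i, Function.Periodic (level w i) Q := fun i j => by
    simpa [level, shift] using congrArg (fun w => level w i j) hper
  have hboundary : ∀ i : ℤ, level w i (-1) = level w i (Q.natAbs - 1) := fun i => by
    rw [sub_eq_neg_add]; exact ((hcol i).natAbs (-1)).symm
  have hsum := hw.sum_level_sub M Q.natAbs
  simp only [hboundary, sub_self, ite_self, sum_const_zero, zero_add] at hsum
  rw [← hsum]
  refine abs_sum_range_le (fun j => ?_) _
  have := hw.abs_level_le M j
  have := hw.abs_level_le 0 j
  rw [abs_le] at *
  constructor <;> linarith

lemma IsValid.drift_eq_zero (hw : IsValid (Cset n) w) {p : ℕ} {Q : ℤ}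
    (hper : shift (p, Q) w = w) :
    drift n p (colCount w p) Q.natAbs (rowCount w Q.natAbs) = 0 := by
  obtain ⟨C, hC⟩ := hw.exists_bound_drift hper
  have hrow : Function.Periodic (rowBit w) Q := fun j => by
    rw [← hw.left_fst_eq_rowBit (-p) j, rowBit]
    simpa [shift] using congrArg (fun w => (left (w (-p, j))).1) hper
  refine eq_zero_of_forall_abs_nat_mul_le (C := C) fun N => ?_
  have h := hC (N * Q.natAbs)
  rwa [rowCount, sum_range_mul_of_periodic hrow.natAbs, ← rowCount,
    show drift n p (colCount w p) ((N * Q.natAbs : ℕ) : ℤ) (N * rowCount w Q.natAbs) =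
      N * drift n p (colCount w p) Q.natAbs (rowCount w Q.natAbs) by
      unfold drift; push_cast; ring] at h

end Counting

section Aperiodicity

variable {n : ℤ} {w : Config}

lemma IsValid.charForm_eq_zero_of_snd_eq_zero (hn : n ≠ 0) (hw : IsValid (Cset n) w)
    {k : ℤ × ℤ} (hk : k.2 = 0) (hper : shift k w = w) :
    charForm n k.1.natAbs (colCount w k.1.natAbs) = 0 := by
  obtain ⟨Q, -, hperQ⟩ := exists_shift_natAbs_fst hper
  obtain ⟨C₁, hC₁⟩ := hw.exists_bound_drift hperQ
  have hper' : shift (0, k.1) (MetallicMean.transpose w) = MetallicMean.transpose w := by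
    rw [← hk, ← Prod.swap, shift_swap_transpose, hper]
  obtain ⟨C₂, hC₂⟩ := (hw.transpose fun _ => reflect_mem_Cset).exists_bound_drift_of_vertical hper'
  simp only [rowCount_transpose, colCount_transpose] at hC₂
  set p := k.1.natAbs
  set B := colCount w p
  -- Both drifts stay bounded as `M` grows, hence so does `M * (n * charForm n p B)`.
  refine (mul_eq_zero.1 (eq_zero_of_forall_abs_nat_mul_le
    (C := |p - B| * C₂ + |p + n * p - B| * C₁) fun M => ?_)).resolve_left hn
  rw [mul_charForm_eq n p B M (rowCount w M)]
  refine (abs_sub _ _).trans ?_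
  rw [abs_mul, abs_mul]
  gcongr
  exacts [hC₂ M, hC₁ M]

lemma IsValid.charForm_eq_zero_of_snd_ne_zero (hn : n ≠ 0) (hw : IsValid (Cset n) w)
    {k : ℤ × ℤ} (hk : k.2 ≠ 0) (hper : shift k w = w) :
    charForm n k.1.natAbs (colCount w k.1.natAbs) = 0 := by
  obtain ⟨Q, hQ, hperQ⟩ := exists_shift_natAbs_fst hper
  have hper' : shift k.swap (MetallicMean.transpose w) = MetallicMean.transpose w := by
    rw [shift_swap_transpose, hper]
  obtain ⟨Q', hQ', hperQ'⟩ := exists_shift_natAbs_fst hper'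
  have e₁ := hw.drift_eq_zero hperQ
  have e₂ := (hw.transpose fun _ => reflect_mem_Cset).drift_eq_zero hperQ'
  rw [hQ] at e₁
  simp only [Prod.fst_swap, Prod.snd_swap] at hQ' e₂
  rw [hQ', rowCount_transpose, colCount_transpose] at e₂
  have h := mul_charForm_eq n k.1.natAbs (colCount w k.1.natAbs) k.2.natAbs (rowCount w k.2.natAbs)
  rw [e₁, e₂, mul_zero, mul_zero, sub_zero] at h
  exact (mul_eq_zero.1 ((mul_eq_zero.1 h).resolve_left (by simpa using hk))).resolve_left hn

theorem IsValid.shift_ne_self_of_fst_ne_zero (hn : n ≠ 0) (hw : IsValid (Cset n) w)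
    {k : ℤ × ℤ} (hk : k.1 ≠ 0) : shift k w ≠ w := by
  intro hper
  refine charForm_ne_zero hn (p := k.1.natAbs) (by simpa using hk) (colCount w k.1.natAbs) ?_
  rcases eq_or_ne k.2 0 with h2 | h2
  · exact hw.charForm_eq_zero_of_snd_eq_zero hn h2 hper
  · exact hw.charForm_eq_zero_of_snd_ne_zero hn h2 hper

theorem IsValid.shift_ne_self (hn : n ≠ 0) (hw : IsValid (Cset n) w) {k : ℤ × ℤ} (hk : k ≠ 0) :
    shift k w ≠ w := by
  rcases eq_or_ne k.1 0 with h1 | h1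
  · intro hper
    refine (hw.transpose fun _ => reflect_mem_Cset).shift_ne_self_of_fst_ne_zero hn
      (k := k.swap) (fun h2 => hk (Prod.ext h1 h2)) ?_
    rw [shift_swap_transpose, hper]
  · exact hw.shift_ne_self_of_fst_ne_zero hn h1

end Aperiodicity

/-- The metallic mean Wang shift Ω_n is aperiodic: it is nonempty and
no valid configuration is fixed by a nonzero shift. -/
theorem statement18 (n : ℤ) (hn : 1 ≤ n) :
    (OmegaOf (Tset n)).Nonempty ∧
    ∀ w ∈ OmegaOf (Tset n), ∀ k : ℤ × ℤ, k ≠ (0, 0) → shift k w ≠ w :=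
  ⟨⟨_, isValid_TileAt_orbit n⟩, fun _ hw _ hk =>
    (hw.mono (Tset_subset_Cset hn)).shift_ne_self (by omega) hk⟩

end MetallicMean
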